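/- arXiv:0711.1147 — 4 statements merged into one kernel-verified Lean document; each statement's English description precedes it below -/
import Mathlib

section
/- For 4×4 real matrices A = [[A₀,A₁],[0,A₀]] and B = [[B₀,B₁],[0,B₀]] (2×2 blocks), define ⟨A,B⟩ = tr(A₀B₀) + tr(A₀B₁) + tr(A₁B₀). Then this bilinear form is symmetric (⟨A,B⟩ = ⟨B,A⟩) and invariant under matrix multiplication (⟨A,BC⟩ = ⟨AB,C⟩) for all A,B,C in the semi-direct sum algebra Ḡ = {[[A₀,A₁],[0,A₀]] : A₀,A₁ ∈ gl(2,ℝ)}. -/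
open Matrix

/-- The bilinear form ⟨A,B⟩ = tr(A₀B₀)+tr(A₀B₁)+tr(A₁B₀) on the semi-direct
sum algebra Ḡ = {[[A₀,A₁],[0,A₀]]} is symmetric and invariant under the
matrix multiplication. -/
theorem stmt_4
    (form : Matrix (Fin 2 ⊕ Fin 2) (Fin 2 ⊕ Fin 2) ℝ →
      Matrix (Fin 2 ⊕ Fin 2) (Fin 2 ⊕ Fin 2) ℝ → ℝ)
    (hform : ∀ X Y, form X Y =
      Matrix.trace (Matrix.toBlocks₁₁ X * Matrix.toBlocks₁₁ Y)
      + Matrix.trace (Matrix.toBlocks₁₁ X * Matrix.toBlocks₁₂ Y)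
      + Matrix.trace (Matrix.toBlocks₁₂ X * Matrix.toBlocks₁₁ Y))
    (Gbar : Set (Matrix (Fin 2 ⊕ Fin 2) (Fin 2 ⊕ Fin 2) ℝ))
    (hGbar : Gbar = {M | ∃ A₀ A₁ : Matrix (Fin 2) (Fin 2) ℝ,
      M = Matrix.fromBlocks A₀ A₁ 0 A₀}) :
    (∀ A ∈ Gbar, ∀ B ∈ Gbar, form A B = form B A) ∧
    (∀ A ∈ Gbar, ∀ B ∈ Gbar, ∀ C ∈ Gbar, form A (B * C) = form (A * B) C) := by
  subst hGbar
  constructor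
  · rintro A ⟨A0, A1, rfl⟩ B ⟨B0, B1, rfl⟩
    simp only [hform, toBlocks_fromBlocks₁₁, toBlocks_fromBlocks₁₂]
    rw [Matrix.trace_mul_comm A0 B0, Matrix.trace_mul_comm A0 B1,
      Matrix.trace_mul_comm A1 B0]
    ring
  · rintro A ⟨A0, A1, rfl⟩ B ⟨B0, B1, rfl⟩ C ⟨C0, C1, rfl⟩
    simp only [hform, Matrix.fromBlocks_multiply, toBlocks_fromBlocks₁₁,
      toBlocks_fromBlocks₁₂, Matrix.mul_add, Matrix.add_mul, Matrix.trace_add,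
      Matrix.zero_mul, Matrix.mul_zero, add_zero, zero_add, Matrix.mul_assoc]
    ring
end

section
/- Let A be an associative ℝ-algebra with a bilinear form ⟨·,·⟩ that is symmetric and invariant under the commutator bracket (⟨X,[Y,Z]⟩ = ⟨[X,Y],Z⟩). Let U, V ∈ A and set Γ = VU. Then for every m ≥ 1, ⟨(UV)^m, (UV)^m⟩ = ⟨(VU)^m, (VU)^m⟩. Consequently, if V : ℤ → A solves the stationary discrete zero curvature equation V(n+1)U(n+1) = U(n)V(n) and Γ(n) = V(n)U(n), then ⟨Γ(n)^m, Γ(n)^m⟩ is independent of n. -/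
/-- For a symmetric bracket-invariant bilinear form:
⟨(UV)^m,(UV)^m⟩ = ⟨(VU)^m,(VU)^m⟩, and consequently ⟨Γ(n)^m,Γ(n)^m⟩
is independent of n for any solution of the stationary discrete zero
curvature equation, where Γ(n) = V(n)U(n). -/
theorem stmt_9 {A : Type*} [Ring A] [Algebra ℝ A]
    (B : A →ₗ[ℝ] A →ₗ[ℝ] ℝ)
    (hsymm : ∀ X Y : A, B X Y = B Y X)
    (hinv : ∀ X Y Z : A, B X (Y * Z - Z * Y) = B (X * Y - Y * X) Z) :
    (∀ U V : A, ∀ m : ℕ, 1 ≤ m →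
      B ((U * V) ^ m) ((U * V) ^ m) = B ((V * U) ^ m) ((V * U) ^ m)) ∧
    (∀ U V : ℤ → A, (∀ n : ℤ, V (n + 1) * U (n + 1) = U n * V n) →
      ∀ Γ : ℤ → A, (∀ n : ℤ, Γ n = V n * U n) →
        ∀ m : ℕ, 1 ≤ m → ∀ n k : ℤ,
          B (Γ n ^ m) (Γ n ^ m) = B (Γ k ^ m) (Γ k ^ m)) := by
  -- Key identity for m = 1 with arbitrary elements.
  have key : ∀ X Y : A, B (X * Y) (X * Y) = B (Y * X) (Y * X) := by
    intro X Y
    -- c := B X ((Y*Y)*X - X*(Y*Y)) vanishes.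
    have hc : B X ((Y * Y) * X - X * (Y * Y)) = 0 := by
      have h1 := hinv X (Y * Y) X
      have h2 := hsymm X ((Y * Y) * X - X * (Y * Y))
      have h3 := hsymm (X * (Y * Y) - (Y * Y) * X) X
      have hneg : B ((Y * Y) * X - X * (Y * Y)) X
          = - B (X * (Y * Y) - (Y * Y) * X) X := by
        have : ((Y * Y) * X - X * (Y * Y) : A)
            = -(X * (Y * Y) - (Y * Y) * X) := by noncomm_ring
        rw [this, map_neg, LinearMap.neg_apply]
      -- h1 : B X ((Y*Y)*X - X*(Y*Y)) = B (X*(Y*Y) - (Y*Y)*X) X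
      -- h2 + hneg : B X (...) = - B (X*(Y*Y)-(Y*Y)*X) X
      have := h2.trans hneg
      linarith [h1, this]
    -- B (a - b) (a + b) = B a a - B b b
    have hexp : B (X * Y - Y * X) (X * Y + Y * X)
        = B (X * Y) (X * Y) - B (Y * X) (Y * X) := by
      have hs := hsymm (X * Y) (Y * X)
      simp [map_sub, map_add, LinearMap.sub_apply]
      linarith
    -- B (a - b) (a + b) = 0 via invariance
    have hzero : B (X * Y - Y * X) (X * Y + Y * X) = 0 := by
      have h1 := hinv X Y (X * Y + Y * X)
      have harith : (Y * (X * Y + Y * X) - (X * Y + Y * X) * Y : A)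
          = (Y * Y) * X - X * (Y * Y) := by noncomm_ring
      rw [harith] at h1
      rw [← h1, hc]
    linarith [hexp, hzero]
  constructor
  · intro U V m hm
    obtain ⟨k, rfl⟩ : ∃ k, m = k + 1 := ⟨m - 1, (Nat.succ_pred_eq_of_pos hm).symm⟩
    have hsc : SemiconjBy V (U * V) (V * U) := by
      unfold SemiconjBy; noncomm_ring
    have hpow := (hsc.pow_right k).eq  -- V * (U*V)^k = (V*U)^k * V
    have ha : (U * V) ^ (k + 1) = U * (V * (U * V) ^ k) := by
      rw [pow_succ', mul_assoc]
    have hb : (V * U) ^ (k + 1) = (V * (U * V) ^ k) * U := by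
      rw [pow_succ, hpow, mul_assoc]
    rw [ha, hb]
    exact key U (V * (U * V) ^ k)
  · intro U V hzc Γ hΓ m hm n k
    have step : ∀ n : ℤ, B (Γ (n + 1) ^ m) (Γ (n + 1) ^ m) = B (Γ n ^ m) (Γ n ^ m) := by
      intro n
      rw [hΓ (n + 1), hΓ n, hzc n]
      obtain ⟨j, rfl⟩ : ∃ j, m = j + 1 := ⟨m - 1, (Nat.succ_pred_eq_of_pos hm).symm⟩
      have hsc : SemiconjBy (V n) (U n * V n) (V n * U n) := by
        unfold SemiconjBy; noncomm_ring
      have hpow := (hsc.pow_right j).eq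
      have ha : (U n * V n) ^ (j + 1) = U n * (V n * (U n * V n) ^ j) := by
        rw [pow_succ', mul_assoc]
      have hb : (V n * U n) ^ (j + 1) = (V n * (U n * V n) ^ j) * U n := by
        rw [pow_succ, hpow, mul_assoc]
      rw [ha, hb]
      exact key (U n) (V n * (U n * V n) ^ j)
    have base : ∀ n : ℤ, B (Γ n ^ m) (Γ n ^ m) = B (Γ 0 ^ m) (Γ 0 ^ m) := by
      intro n
      induction n using Int.induction_on with
      | zero => rfl
      | succ i ih => rw [step i, ih]
      | pred i ih =>
          have h := step (-(i : ℤ) - 1)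
          simp only [sub_add_cancel] at h
          exact h.symm.trans ih
    rw [base n, base k]
end

section
/- Let U, V, Λ : ℤ → Mₙ(ℝ) be matrix sequences satisfying (i) V(n+1)U(n+1) = U(n)V(n) and (ii) Ũ(n) + U(n)Λ(n−1) − Λ(n)U(n) = 0 for all n, where Ũ : ℤ → Mₙ(ℝ) is a further sequence. Define Θ(n) = Λ(n−1)V(n) − V(n)Λ(n). Then Θ(n+1)U(n+1) − U(n)Θ(n) = Ũ(n)V(n) − V(n+1)Ũ(n+1) for all n. -/
/-- Key computation of the discrete variational identity: if
V(n+1)U(n+1) = U(n)V(n) and Utl(n) + U(n)Λ(n−1) − Λ(n)U(n) = 0, then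
Θ(n) = Λ(n−1)V(n) − V(n)Λ(n) satisfies
Θ(n+1)U(n+1) − U(n)Θ(n) = Utl(n)V(n) − V(n+1)Utl(n+1). -/
theorem stmt_11 {N : ℕ} (U V Λ Utl : ℤ → Matrix (Fin N) (Fin N) ℝ)
    (h1 : ∀ n : ℤ, V (n + 1) * U (n + 1) = U n * V n)
    (h2 : ∀ n : ℤ, Utl n + U n * Λ (n - 1) - Λ n * U n = 0)
    (Θ : ℤ → Matrix (Fin N) (Fin N) ℝ)
    (hΘ : ∀ n : ℤ, Θ n = Λ (n - 1) * V n - V n * Λ n) :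
    ∀ n : ℤ, Θ (n + 1) * U (n + 1) - U n * Θ n
      = Utl n * V n - V (n + 1) * Utl (n + 1) := by
  intro n
  have hn : Utl n = Λ n * U n - U n * Λ (n - 1) :=
    eq_sub_of_add_eq (sub_eq_zero.mp (h2 n))
  have hn1 : Utl (n + 1) = Λ (n + 1) * U (n + 1) - U (n + 1) * Λ n := by
    have := eq_sub_of_add_eq (sub_eq_zero.mp (h2 (n + 1)))
    simpa using this
  have hΘ1 : Θ (n + 1) = Λ n * V (n + 1) - V (n + 1) * Λ (n + 1) := by
    have := hΘ (n + 1); simpa using this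
  rw [hn, hn1, hΘ1, hΘ n]
  have h := h1 n
  noncomm_ring
  rw [show Λ n * (V (n+1) * U (n+1)) = Λ n * (U n * V n) from by rw [h],
      show V (n+1) * (U (n+1) * Λ n) = U n * V n * Λ n from by rw [← h, mul_assoc]]
  noncomm_ring
end

section
/- Fix λ ≠ 0 and let u, v : ℤ → ℝ. Define the 2×2 matrices U(n) = [[1,u(n)],[λ⁻¹,0]], V⁰(n) = [[λ/2 − u(n), λu(n)],[1, −λ/2 + u(n−1)]] (the m=0 Lax matrix λΓ₀ + Γ₁ + Δ₀ of the Volterra hierarchy, with a₀=1/2, b₀=u, c₀=0, a₁=−u, b₁=−u(u⁽¹⁾+u), c₁=1, Δ₀ = [[0, −b₁],[0, a₁+a₁⁽⁻¹⁾]]). Then the discrete zero curvature equation U_t(n) = V⁰(n+1)U(n) − U(n)V⁰(n) holds if and only if u_t(n) = u(n)(u(n−1) − u(n+1)) for all n, where U_t(n) = [[0, u_t(n)],[0,0]]. -/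
/-- The m = 0 discrete zero curvature equation for the Volterra spectral
problem, with V⁰ = λΓ₀ + Γ₁ + Δ₀ built from a₀ = 1/2, b₀ = u, c₀ = 0,
a₁ = −u, b₁ = −u(u⁽¹⁾+u), c₁ = 1 and Δ₀ = [[0,−b₁],[0,a₁+a₁⁽⁻¹⁾]],
is equivalent to the Volterra lattice u_t = u(u⁽⁻¹⁾ − u⁽¹⁾). -/
theorem stmt_19 (lam : ℝ) (hlam : lam ≠ 0) (u ut : ℤ → ℝ)
    (U V₀ Ut : ℤ → Matrix (Fin 2) (Fin 2) ℝ)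
    (hU : ∀ n, U n = !![1, u n; lam⁻¹, 0])
    (hV₀ : ∀ n, V₀ n =
      lam • !![(1 : ℝ) / 2, u n; 0, -(1 / 2)]
      + !![-u n, -(u n * (u (n + 1) + u n)); 1, u n]
      + !![0, -(-(u n * (u (n + 1) + u n))); 0, -u n + -u (n - 1)])
    (hUt : ∀ n, Ut n = !![0, ut n; 0, 0]) :
    (∀ n : ℤ, Ut n = V₀ (n + 1) * U n - U n * V₀ n) ↔
    (∀ n : ℤ, ut n = u n * (u (n - 1) - u (n + 1))) := by
  constructor
  · intro h n
    have h2 := congrFun (congrFun (h n) 0) 1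
    simp [hU, hV₀, hUt, Matrix.mul_apply, Fin.sum_univ_succ,
      show n + 1 - 1 = n from by ring] at h2
    field_simp at h2
    linarith [h2]
  · intro h n
    ext i j
    have h1 := h n
    fin_cases i <;> fin_cases j <;>
      simp [hU, hV₀, hUt, Matrix.mul_apply, Fin.sum_univ_succ,
        show n + 1 - 1 = n from by ring] <;>
      field_simp <;> nlinarith [h1, sq_nonneg (u n)]
end
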